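/- If H has a vertex cover of size c and F has vertex cover number strictly greater than c (i.e., |V(F)| − α(F) > |V(H)| − α(H)), then ex(n, H, F) = Ω(n^{α(H)}): the graph obtained from H by blowing up each vertex of a maximum independent set of H to size ⌊n/|V(H)|⌋ is F-free and contains at least (⌊n/|V(H)|⌋)^{α(H)} copies of H. -/

import Mathlib

open SimpleGraph

/-- `G` contains no subgraph isomorphic to `F`. -/
def SimpleGraph.Free' {γ β : Type*} (F : SimpleGraph γ) (G : SimpleGraph β) : Prop :=
  ¬ ∃ f : F →g G, Function.Injective f

/-- The number of copies of `H` in `G`: the number of subgraphs of `G` isomorphic to `H`. -/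
noncomputable def copyCount {α β : Type*} (H : SimpleGraph α) (G : SimpleGraph β) : ℕ :=
  {G' : G.Subgraph | Nonempty (H ≃g G'.coe)}.ncard

/-- The generalized Turán number `ex(n, H, F)`. -/
noncomputable def genex {α γ : Type*} (n : ℕ) (H : SimpleGraph α) (F : SimpleGraph γ) : ℕ :=
  sSup {m | ∃ G : SimpleGraph (Fin n), F.Free' G ∧ _root_.copyCount H G = m}

/-- The independence number `α(H)`. -/
noncomputable def indepNum {α : Type*} (H : SimpleGraph α) : ℕ :=
  sSup {m | ∃ s : Set α, (∀ a ∈ s, ∀ b ∈ s, ¬ H.Adj a b) ∧ s.ncard = m}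

/-- The partial blowup of `H` where each vertex of `I` is blown up to `t` copies
(vertices outside `I` use only their `0`-th copy). -/
def partialBlowup {α : Type*} (H : SimpleGraph α) (I : Set α) (t : ℕ) :
    SimpleGraph (α × Fin t) :=
  SimpleGraph.fromRel
    (fun x y => H.Adj x.1 y.1 ∧ (x.1 ∉ I → x.2.val = 0) ∧ (y.1 ∉ I → y.2.val = 0))

/- ------------------ auxiliary lemmas ------------------ -/

lemma aux_subgraph_finite {V : Type*} [Finite V] (G : SimpleGraph V) : Finite G.Subgraph := by
  have : Function.Injective (fun s : G.Subgraph => (s.verts, s.Adj)) := by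
    intro a b h
    simp only [Prod.mk.injEq] at h
    exact SimpleGraph.Subgraph.ext h.1 h.2
  exact Finite.of_injective _ this

lemma aux_ncard_indep_le {α : Type*} [Fintype α] (H : SimpleGraph α) {s : Set α}
    (hs : ∀ a ∈ s, ∀ b ∈ s, ¬ H.Adj a b) : s.ncard ≤ _root_.indepNum H := by
  refine le_csSup ⟨Fintype.card α, ?_⟩ ⟨s, hs, rfl⟩
  rintro m ⟨u, -, rfl⟩
  calc u.ncard ≤ (Set.univ : Set α).ncard :=
        Set.ncard_le_ncard (Set.subset_univ u) Set.finite_univ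
    _ = Fintype.card α := by rw [Set.ncard_univ, Nat.card_eq_fintype_card]

lemma aux_isEmpty_of_indep0 {α : Type*} [Fintype α] (H : SimpleGraph α)
    (h : _root_.indepNum H = 0) : IsEmpty α := by
  rw [← not_nonempty_iff]
  rintro ⟨a⟩
  have h1 : ({a} : Set α).ncard ≤ _root_.indepNum H := by
    refine aux_ncard_indep_le H ?_
    rintro x hx y hy
    simp only [Set.mem_singleton_iff] at hx hy
    subst hx; subst hy; exact H.irrefl
  simp [h] at h1

lemma aux_free_of_cover {γ β : Type*} [Fintype γ] [Fintype β] (F : SimpleGraph γ)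
    (G : SimpleGraph β) (C : Set β) (hC : ∀ x y, G.Adj x y → x ∈ C ∨ y ∈ C)
    (hsize : C.ncard < Fintype.card γ - _root_.indepNum F) : F.Free' G := by
  rintro ⟨f, hf⟩
  set P : Set γ := f ⁻¹' C with hP
  have hPle : P.ncard ≤ C.ncard := by
    have h1 : (f '' P).ncard = P.ncard := Set.ncard_image_of_injective P hf
    have h2 : f '' P ⊆ C := Set.image_preimage_subset f C
    calc P.ncard = (f '' P).ncard := h1.symm
      _ ≤ C.ncard := Set.ncard_le_ncard h2 C.toFinite
  have hind : ∀ a ∈ Pᶜ, ∀ b ∈ Pᶜ, ¬ F.Adj a b := by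
    intro a ha b hb hab
    rcases hC _ _ (f.map_adj hab) with h | h
    · exact ha h
    · exact hb h
  have h3 : Pᶜ.ncard ≤ _root_.indepNum F := aux_ncard_indep_le F hind
  have h4 : P.ncard + Pᶜ.ncard = Fintype.card γ := by
    rw [Set.ncard_add_ncard_compl, Nat.card_eq_fintype_card]
  omega

/-- The subgraph given by the image of an embedding. -/
def embSub {α β : Type*} {H : SimpleGraph α} {G : SimpleGraph β} (e : H ↪g G) :
    G.Subgraph where
  verts := Set.range e
  Adj x y := ∃ a b, H.Adj a b ∧ e a = x ∧ e b = y
  adj_sub := by rintro x y ⟨a, b, hab, rfl, rfl⟩; exact e.map_rel_iff.2 hab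
  edge_vert := by rintro x y ⟨a, b, hab, rfl, rfl⟩; exact ⟨a, rfl⟩
  symm := by constructor; rintro x y ⟨a, b, hab, rfl, rfl⟩; exact ⟨b, a, hab.symm, rfl, rfl⟩

noncomputable def embSubIso {α β : Type*} {H : SimpleGraph α} {G : SimpleGraph β}
    (e : H ↪g G) : H ≃g (embSub e).coe where
  toEquiv := Equiv.ofInjective e e.injective
  map_rel_iff' := by
    intro a b
    simp only [Equiv.ofInjective_apply, SimpleGraph.Subgraph.coe_adj]
    constructor
    · rintro ⟨a', b', h, ha, hb⟩
      rw [e.injective ha, e.injective hb] at h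
      exact h
    · intro h
      exact ⟨a, b, h, rfl, rfl⟩

lemma aux_le_copyCount {α β κ : Type*} [Finite β] [Finite κ] {H : SimpleGraph α}
    {G : SimpleGraph β} (e : κ → (H ↪g G))
    (hinj : Function.Injective (fun k => Set.range (e k))) :
    Nat.card κ ≤ _root_.copyCount H G := by
  have : Finite G.Subgraph := aux_subgraph_finite G
  rw [_root_.copyCount, ← Nat.card_coe_set_eq]
  refine Nat.card_le_card_of_injective
    (fun k => (⟨embSub (e k), ⟨embSubIso (e k)⟩⟩ :
      {G' : G.Subgraph | Nonempty (H ≃g G'.coe)})) ?_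
  intro k k' h
  apply hinj
  have h2 : embSub (e k) = embSub (e k') := congrArg Subtype.val h
  exact congrArg SimpleGraph.Subgraph.verts h2

lemma aux_bddAbove_genex {α : Type*} (H : SimpleGraph α) {γ : Type*} (F : SimpleGraph γ)
    (n : ℕ) : BddAbove {m | ∃ G : SimpleGraph (Fin n), F.Free' G ∧ _root_.copyCount H G = m} := by
  refine ⟨Nat.card (Set (Fin n) × (Fin n → Fin n → Prop)), ?_⟩
  rintro m ⟨G, -, rfl⟩
  have hfin : Finite G.Subgraph := aux_subgraph_finite G
  calc _root_.copyCount H G ≤ (Set.univ : Set G.Subgraph).ncard :=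
        Set.ncard_le_ncard (Set.subset_univ _) Set.finite_univ
    _ = Nat.card G.Subgraph := Set.ncard_univ _
    _ ≤ Nat.card (Set (Fin n) × (Fin n → Fin n → Prop)) := by
        refine Nat.card_le_card_of_injective (fun s => (s.verts, s.Adj)) ?_
        intro a b h
        simp only [Prod.mk.injEq] at h
        exact SimpleGraph.Subgraph.ext h.1 h.2

lemma blow_adj {α : Type*} (H : SimpleGraph α) (I : Set α) {t : ℕ} (x y : α × Fin t) :
    (partialBlowup H I t).Adj x y ↔
      x ≠ y ∧ H.Adj x.1 y.1 ∧ (x.1 ∉ I → x.2.val = 0) ∧ (y.1 ∉ I → y.2.val = 0) := by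
  simp only [partialBlowup, SimpleGraph.fromRel_adj]
  constructor
  · rintro ⟨hne, h | h⟩
    exacts [⟨hne, h.1, h.2.1, h.2.2⟩, ⟨hne, h.1.symm, h.2.2, h.2.1⟩]
  · rintro ⟨hne, h1, h2, h3⟩
    exact ⟨hne, Or.inl ⟨h1, h2, h3⟩⟩

open scoped Classical in
/-- The embedding of `H` into its partial blowup given by a choice of copies on `I`. -/
noncomputable def blowEmb {α : Type*} (H : SimpleGraph α) (I : Set α) {t : ℕ} (ht : 0 < t)
    (g : ↥I → Fin t) : H ↪g partialBlowup H I t where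
  toFun a := (a, if h : a ∈ I then g ⟨a, h⟩ else ⟨0, ht⟩)
  inj' := by
    intro a b h
    exact congrArg Prod.fst h
  map_rel_iff' := by
    intro a b
    rw [blow_adj]
    constructor
    · exact fun h => h.2.1
    · intro h
      refine ⟨?_, h, ?_, ?_⟩
      · intro hc
        exact h.ne (congrArg Prod.fst hc)
      · intro ha
        have ha' : a ∉ I := ha
        show ((if h : a ∈ I then g ⟨a, h⟩ else ⟨0, ht⟩) : Fin t).val = 0
        rw [dif_neg ha']
      · intro hb
        have hb' : b ∉ I := hb
        show ((if h : b ∈ I then g ⟨b, h⟩ else ⟨0, ht⟩) : Fin t).val = 0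
        rw [dif_neg hb']


open scoped Classical in
lemma blowEmb_apply {α : Type*} (H : SimpleGraph α) (I : Set α) {t : ℕ} (ht : 0 < t)
    (g : ↥I → Fin t) (a : α) :
    (blowEmb H I ht g) a = (a, if h : a ∈ I then g ⟨a, h⟩ else ⟨0, ht⟩) := rfl

/-- The empty embedding. -/
def emptyEmb {α β : Type*} [IsEmpty α] (H : SimpleGraph α) (G : SimpleGraph β) :
    H ↪g G :=
  ⟨⟨isEmptyElim, fun {a} => isEmptyElim a⟩, fun {a} => isEmptyElim a⟩

/-- If `|V(F)| − α(F) > |V(H)| − α(H)`, then blowing up each vertex of a maximum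
independent set of `H` to size `⌊n/|V(H)|⌋` yields an `F`-free graph with at least
`⌊n/|V(H)|⌋^{α(H)}` copies of `H`; hence `ex(n, H, F) ≥ ⌊n/|V(H)|⌋^{α(H)}`. -/
theorem stmt_13 {α γ : Type*} [Fintype α] [Fintype γ]
    (H : SimpleGraph α) (F : SimpleGraph γ) (n : ℕ) (I : Set α)
    (hI : ∀ a ∈ I, ∀ b ∈ I, ¬ H.Adj a b) (hImax : I.ncard = _root_.indepNum H)
    (hcov : Fintype.card α - _root_.indepNum H < Fintype.card γ - _root_.indepNum F) :
    F.Free' (partialBlowup H I (n / Fintype.card α)) ∧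
      (n / Fintype.card α) ^ _root_.indepNum H ≤
        _root_.copyCount H (partialBlowup H I (n / Fintype.card α)) ∧
      (n / Fintype.card α) ^ _root_.indepNum H ≤ genex n H F := by
  classical
  set c := Fintype.card α with hc
  set t := n / c with htdef
  set B := partialBlowup H I t with hB
  set C : Set (α × Fin t) := {x | x.1 ∉ I ∧ x.2.val = 0} with hCdef
  have hcover : ∀ x y, B.Adj x y → x ∈ C ∨ y ∈ C := by
    intro x y hxy
    rw [hB, blow_adj] at hxy
    obtain ⟨-, hadj, hx, hy⟩ := hxy
    by_cases hx1 : x.1 ∈ I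
    · by_cases hy1 : y.1 ∈ I
      · exact absurd hadj (hI _ hx1 _ hy1)
      · exact Or.inr ⟨hy1, hy hy1⟩
    · exact Or.inl ⟨hx1, hx hx1⟩
  have hIc : I.ncard + Iᶜ.ncard = c := by
    rw [Set.ncard_add_ncard_compl, Nat.card_eq_fintype_card]
  have hCsize : C.ncard ≤ c - _root_.indepNum H := by
    have hinj : Set.InjOn Prod.fst C := by
      rintro ⟨a, i⟩ ⟨hai, hi⟩ ⟨b, j⟩ ⟨hbj, hj⟩ h
      simp only at h
      subst h
      have : i = j := Fin.ext (hi.trans hj.symm)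
      rw [this]
    have h1 : (Prod.fst '' C).ncard = C.ncard := Set.ncard_image_of_injOn hinj
    have h2 : Prod.fst '' C ⊆ Iᶜ := by rintro a ⟨x, hx, rfl⟩; exact hx.1
    have h3 : C.ncard ≤ Iᶜ.ncard := h1 ▸ Set.ncard_le_ncard h2 (Set.toFinite _)
    omega
  have hfreeB : F.Free' B := aux_free_of_cover F B C hcover (lt_of_le_of_lt hCsize hcov)
  refine ⟨hfreeB, ?_⟩
  rcases Nat.eq_zero_or_pos t with ht0 | ht
  · -- t = 0
    by_cases hα : _root_.indepNum H = 0
    · haveI := aux_isEmpty_of_indep0 H hα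
      haveI : IsEmpty (α × Fin t) := by infer_instance
      have hBcount : 1 ≤ _root_.copyCount H B := by
        have := aux_le_copyCount (G := B) (fun _ : PUnit.{1} => emptyEmb H B)
          (Function.injective_of_subsingleton _)
        simpa using this
      have hG0free : F.Free' (⊥ : SimpleGraph (Fin n)) := by
        refine aux_free_of_cover F ⊥ ∅ (fun x y h => absurd h (by simp)) ?_
        simp only [Set.ncard_empty]
        omega
      have hG0count : 1 ≤ _root_.copyCount H (⊥ : SimpleGraph (Fin n)) := by
        have := aux_le_copyCount (G := (⊥ : SimpleGraph (Fin n)))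
          (fun _ : PUnit.{1} => emptyEmb H ⊥) (Function.injective_of_subsingleton _)
        simpa using this
      have hgen : 1 ≤ genex n H F :=
        le_trans hG0count (le_csSup (aux_bddAbove_genex H F n) ⟨⊥, hG0free, rfl⟩)
      rw [hα]
      simpa using ⟨hBcount, hgen⟩
    · have hz : t ^ _root_.indepNum H = 0 := by rw [ht0, zero_pow hα]
      rw [hz]
      exact ⟨Nat.zero_le _, Nat.zero_le _⟩
  · -- t > 0
    have hκ : Nat.card (↥I → Fin t) = t ^ _root_.indepNum H := by
      rw [Nat.card_fun, Nat.card_eq_fintype_card, Fintype.card_fin,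
        Nat.card_coe_set_eq, hImax]
    have hrinj : Function.Injective
        (fun g : ↥I → Fin t => Set.range (blowEmb H I ht g)) := by
      intro g g' h
      have h' : Set.range ⇑(blowEmb H I ht g) = Set.range ⇑(blowEmb H I ht g') := h
      funext x
      have hx : ((x : α), g x) ∈ Set.range (blowEmb H I ht g) :=
        ⟨(x : α), by rw [blowEmb_apply, dif_pos x.2]⟩
      rw [h'] at hx
      obtain ⟨b, hb⟩ := hx
      rw [blowEmb_apply] at hb
      have hb1 : b = (x : α) := congrArg Prod.fst hb
      subst hb1
      have hb2 := congrArg Prod.snd hb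
      simp only [dif_pos x.2] at hb2
      exact hb2.symm
    have h1 : t ^ _root_.indepNum H ≤ _root_.copyCount H B :=
      hκ ▸ aux_le_copyCount (blowEmb H I ht) hrinj
    have hcard : Fintype.card (α × Fin t) ≤ Fintype.card (Fin n) := by
      rw [Fintype.card_prod, Fintype.card_fin, Fintype.card_fin, mul_comm]
      exact Nat.div_mul_le_self n c
    obtain ⟨ι⟩ := Function.Embedding.nonempty_of_card_le hcard
    set G : SimpleGraph (Fin n) := B.map ι with hGdef
    have hGcover : ∀ x y, G.Adj x y → x ∈ ι '' C ∨ y ∈ ι '' C := by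
      intro x y hxy
      rw [hGdef, SimpleGraph.map_adj] at hxy
      obtain ⟨u, v, huv, rfl, rfl⟩ := hxy
      rcases hcover u v huv with h | h
      · exact Or.inl ⟨u, h, rfl⟩
      · exact Or.inr ⟨v, h, rfl⟩
    have hGfree : F.Free' G := by
      refine aux_free_of_cover F G (ι '' C) hGcover ?_
      rw [Set.ncard_image_of_injective C ι.injective]
      exact lt_of_le_of_lt hCsize hcov
    have hrange : ∀ g : ↥I → Fin t,
        Set.range (((SimpleGraph.Embedding.map ι B).comp (blowEmb H I ht g))) =
          ι '' Set.range (blowEmb H I ht g) := by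
      intro g
      rw [← Set.range_comp]
      rfl
    have hrinjG : Function.Injective
        (fun g : ↥I → Fin t =>
          Set.range ((SimpleGraph.Embedding.map ι B).comp (blowEmb H I ht g))) := by
      intro g g' h
      apply hrinj
      apply Set.image_injective.mpr ι.injective
      rw [← hrange, ← hrange]
      exact h
    have h2 : t ^ _root_.indepNum H ≤ _root_.copyCount H G :=
      hκ ▸ aux_le_copyCount
        (fun g : ↥I → Fin t => (SimpleGraph.Embedding.map ι B).comp (blowEmb H I ht g))
        hrinjG
    exact ⟨h1, le_trans h2 (le_csSup (aux_bddAbove_genex H F n) ⟨G, hGfree, rfl⟩)⟩
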